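/- arXiv:2509.14672 — 6 statements merged into one kernel-verified Lean document; each statement's English description precedes it below -/
import Mathlib

section
/- For every integer p ≥ 0, Σ_{n=0}^{p} n · D(n) = ⌊(p+1)!/e⌋. -/
/-!
Since `D (n + 1) = (n + 1) D n - (-1) ^ n`, the sum telescopes to `D (p + 1)` minus `1` when
`p + 1` is even. On the other side, the defect `r n = (-1) ^ n (D n - n!/e)` satisfies
`r (n + 1) = 1 - (n + 1) r n`, and `r n / n!` is non-increasing in steps of two and tends to `0`,
so `r ≥ 0`; the recursion then squeezes `r n` into `(0, 1)`. Hence `n!/e` lies strictly between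
`D n - 1` and `D n` for even `n` and between `D n` and `D n + 1` for odd `n`.
-/

open Filter Topology Real Nat

theorem sum_range_mul_numDerangements (m : ℕ) :
    ∑ n ∈ Finset.range m, (n * numDerangements n : ℤ) =
      numDerangements m - if Even m then 1 else 0 := by
  induction m with
  | zero => simp
  | succ m ih =>
    rw [Finset.sum_range_succ, ih, numDerangements_succ]
    rcases Nat.even_or_odd m with hm | hm
    · rw [if_pos hm, if_neg (Nat.not_even_iff_odd.2 hm.add_one), hm.neg_one_pow]
      ring
    · rw [if_neg (Nat.not_even_iff_odd.2 hm), if_pos hm.add_one, hm.neg_one_pow]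
      ring

noncomputable def numDerangementsDefect (n : ℕ) : ℝ :=
  (-1) ^ n * (numDerangements n - n ! * exp (-1))

theorem numDerangementsDefect_succ (n : ℕ) :
    numDerangementsDefect (n + 1) = 1 - (n + 1) * numDerangementsDefect n := by
  have hD := congrArg (Int.cast (R := ℝ)) (numDerangements_succ n)
  have hsq : ((-1 : ℝ) ^ n) ^ 2 = 1 := by rw [pow_right_comm, neg_one_sq, one_pow]
  push_cast at hD
  simp only [numDerangementsDefect, hD, Nat.factorial_succ, pow_succ]
  push_cast
  linear_combination hsq

theorem tendsto_numDerangementsDefect_div_factorial :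
    Tendsto (fun n ↦ numDerangementsDefect n / n !) atTop (𝓝 0) := by
  have hlim := tendsto_sub_nhds_zero_iff.2 numDerangements_tendsto_inv_e
  refine tendsto_zero_iff_norm_tendsto_zero.2 ((tendsto_zero_iff_norm_tendsto_zero.1 hlim).congr
    fun n ↦ ?_)
  have hfac : (n ! : ℝ) ≠ 0 := by positivity
  rw [numDerangementsDefect, mul_div_assoc, norm_mul, norm_pow, norm_neg, norm_one, one_pow,
    one_mul, sub_div, mul_div_cancel_left₀ _ hfac]

theorem numDerangementsDefect_add_two_div_factorial_le (n : ℕ) :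
    numDerangementsDefect (n + 2) / (n + 2)! ≤ numDerangementsDefect n / n ! := by
  have hstep : numDerangementsDefect (n + 2) =
      (n + 2) * (n + 1) * numDerangementsDefect n - (n + 1) := by
    rw [numDerangementsDefect_succ, numDerangementsDefect_succ]
    push_cast
    ring
  rw [hstep, Nat.factorial_succ, Nat.factorial_succ, div_le_div_iff₀ (by positivity)
    (by positivity)]
  push_cast
  nlinarith [show (0 : ℝ) < (n ! : ℝ) by positivity]

theorem numDerangementsDefect_nonneg (n : ℕ) : 0 ≤ numDerangementsDefect n := by
  have hanti : Antitone fun k ↦ numDerangementsDefect (n + 2 * k) / (n + 2 * k)! :=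
    antitone_nat_of_succ_le fun k ↦ numDerangementsDefect_add_two_div_factorial_le (n + 2 * k)
  have hlim : Tendsto (fun k ↦ numDerangementsDefect (n + 2 * k) / (n + 2 * k)!) atTop (𝓝 0) :=
    tendsto_numDerangementsDefect_div_factorial.comp
      (tendsto_atTop_mono (fun k ↦ show k ≤ n + 2 * k by omega) tendsto_id)
  simpa using (le_div_iff₀ (by positivity)).1 (hanti.le_of_tendsto hlim 0)

theorem numDerangementsDefect_pos (n : ℕ) : 0 < numDerangementsDefect n := by
  have h₁ := numDerangementsDefect_succ n
  have h₂ := numDerangementsDefect_succ (n + 1)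
  have h₃ := numDerangementsDefect_nonneg (n + 1)
  have h₄ := numDerangementsDefect_nonneg (n + 2)
  push_cast at h₂
  nlinarith

theorem numDerangementsDefect_lt_one (n : ℕ) : numDerangementsDefect n < 1 := by
  have h₁ := numDerangementsDefect_succ n
  have h₂ := numDerangementsDefect_pos n
  have h₃ := numDerangementsDefect_pos (n + 1)
  nlinarith [(n.cast_nonneg : (0 : ℝ) ≤ n)]

theorem floor_factorial_div_exp_one (n : ℕ) :
    ⌊(n ! : ℝ) / exp 1⌋ = numDerangements n - if Even n then 1 else 0 := by
  have hpos := numDerangementsDefect_pos n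
  have hlt := numDerangementsDefect_lt_one n
  have hdiv : (n ! : ℝ) / exp 1 = numDerangements n - (-1) ^ n * numDerangementsDefect n := by
    have hsq : ((-1 : ℝ) ^ n) ^ 2 = 1 := by rw [pow_right_comm, neg_one_sq, one_pow]
    rw [numDerangementsDefect, exp_neg, div_eq_mul_inv]
    linear_combination (numDerangements n - n ! * (exp 1)⁻¹ : ℝ) * hsq
  rw [Int.floor_eq_iff, hdiv]
  rcases Nat.even_or_odd n with hn | hn
  · simp only [hn, hn.neg_one_pow, if_true]
    push_cast
    constructor <;> linarith
  · simp only [Nat.not_even_iff_odd.2 hn, hn.neg_one_pow, if_false]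
    push_cast
    constructor <;> linarith

theorem sum_n_derangements (p : ℕ) :
    (∑ n ∈ Finset.range (p + 1), n * numDerangements n : ℤ) = ⌊((p + 1).factorial : ℝ) / Real.exp 1⌋ := by
  rw [sum_range_mul_numDerangements, floor_factorial_div_exp_one]
end

section
/- For every integer p ≥ 0, ⌊(p+2)!/e⌋ = ⌊(p+1)!/e⌋ + (p+1) · ⌊((p+1)! + 1)/e⌋. -/
/-!
Let `D n = n! ∑_{k ≤ n} (-1)^k / k!` be the number of derangements. The alternating series for
`e⁻¹` gives `|n!/e - D n| < 1/(n+1)`, and for a real `x` within `1/(n+1)` of an integer `d`,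
`⌊(n+1) x⌋ = ⌊x⌋ + n d`: both floors are off by `-1` exactly when `x < d`. Apply this with
`x = (p+1)!/e` and `d = D (p+1)`; the same error bound, being below `1/e` and `1 - 1/e`,
also gives `⌊((p+1)! + 1)/e⌋ = D (p+1)`.
-/

open Finset Filter Nat Topology

theorem floor_natCast_add_one_mul_of_abs_sub_lt {K : Type*} [Field K] [LinearOrder K]
    [IsStrictOrderedRing K] [FloorRing K] {x : K} {d : ℤ} {n : ℕ} (h : |x - d| < 1 / (n + 1)) :
    ⌊(n + 1) * x⌋ = ⌊x⌋ + n * d := by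
  have hn : (0 : K) < n + 1 := by positivity
  have hn1 : (1 : K) ≤ n + 1 := by simp
  rw [abs_sub_lt_iff, lt_div_iff₀ hn, lt_div_iff₀ hn] at h
  obtain ⟨h₁, h₂⟩ := h
  rcases le_or_gt (d : K) x with hdx | hxd
  · rw [Int.floor_eq_iff.mpr ⟨hdx, by nlinarith⟩, Int.floor_eq_iff]
    push_cast
    constructor <;> nlinarith
  · have hfloor : ⌊x⌋ = d - 1 := Int.floor_eq_iff.mpr ⟨by push_cast; nlinarith, by push_cast; linarith⟩
    rw [hfloor, Int.floor_eq_iff]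
    push_cast
    constructor <;> nlinarith

theorem antitone_inv_factorial : Antitone fun i : ℕ => ((i ! : ℝ))⁻¹ :=
  fun _ _ hij => inv_anti₀ (by positivity) (by exact_mod_cast factorial_le hij)

theorem tendsto_sum_range_neg_one_pow_mul_inv_factorial :
    Tendsto (fun n => ∑ i ∈ range n, (-1 : ℝ) ^ i * (i ! : ℝ)⁻¹) atTop (𝓝 (Real.exp (-1))) := by
  rw [Real.exp_eq_exp_ℝ]
  simpa only [div_eq_mul_inv] using (NormedSpace.expSeries_div_hasSum_exp (-1 : ℝ)).tendsto_sum_nat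

theorem sum_range_two_mul_lt_exp_neg_one (k : ℕ) :
    ∑ i ∈ range (2 * k), (-1 : ℝ) ^ i / i ! < Real.exp (-1) := by
  rcases k.eq_zero_or_pos with rfl | hk
  · simpa using Real.exp_pos (-1)
  have hle := Antitone.alternating_series_le_tendsto tendsto_sum_range_neg_one_pow_mul_inv_factorial
    antitone_inv_factorial (k + 1)
  have hfac : ((2 * k + 1) ! : ℝ)⁻¹ < ((2 * k) ! : ℝ)⁻¹ :=
    inv_strictAnti₀ (by positivity) (by exact_mod_cast (factorial_lt (by omega)).mpr (by omega))
  rw [mul_add, mul_one, sum_range_succ, sum_range_succ, (even_two_mul k).neg_one_pow,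
    (odd_two_mul_add_one k).neg_one_pow] at hle
  simp only [div_eq_mul_inv]
  linarith

theorem exp_neg_one_lt_sum_range_two_mul_add_one (k : ℕ) :
    Real.exp (-1) < ∑ i ∈ range (2 * k + 1), (-1 : ℝ) ^ i / i ! := by
  have hle := Antitone.tendsto_le_alternating_series tendsto_sum_range_neg_one_pow_mul_inv_factorial
    antitone_inv_factorial (k + 1)
  have hfac : ((2 * k + 2) ! : ℝ)⁻¹ < ((2 * k + 1) ! : ℝ)⁻¹ :=
    inv_strictAnti₀ (by positivity) (by exact_mod_cast (factorial_lt (by omega)).mpr (by omega))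
  rw [mul_add, mul_one, sum_range_succ, sum_range_succ, (odd_two_mul_add_one k).neg_one_pow,
    Even.neg_one_pow ⟨k + 1, by omega⟩] at hle
  simp only [div_eq_mul_inv]
  linarith

theorem abs_exp_neg_one_sub_sum_range_lt (m : ℕ) :
    |Real.exp (-1) - ∑ i ∈ range m, (-1 : ℝ) ^ i / i !| < 1 / m ! := by
  rw [abs_sub_lt_iff]
  obtain ⟨k, rfl | rfl⟩ := Nat.even_or_odd' m
  · have hlt := exp_neg_one_lt_sum_range_two_mul_add_one k
    rw [sum_range_succ, (even_two_mul k).neg_one_pow] at hlt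
    constructor <;> linarith [sum_range_two_mul_lt_exp_neg_one k]
  · have hlt := sum_range_two_mul_lt_exp_neg_one (k + 1)
    rw [mul_add, mul_one, sum_range_succ, (odd_two_mul_add_one k).neg_one_pow, neg_div] at hlt
    constructor <;> linarith [exp_neg_one_lt_sum_range_two_mul_add_one k]

theorem numDerangements_eq_factorial_mul_sum (n : ℕ) :
    (numDerangements n : ℝ) = n ! * ∑ k ∈ range (n + 1), (-1 : ℝ) ^ k / k ! := by
  rw [← Int.cast_natCast, numDerangements_sum, mul_sum]
  push_cast
  refine sum_congr rfl fun k hk => ?_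
  have hkn : k ≤ n := mem_range_succ_iff.mp hk
  rw [ascFactorial_eq_div, add_tsub_cancel_of_le hkn]
  push_cast [factorial_dvd_factorial hkn]
  ring

theorem abs_factorial_div_exp_sub_numDerangements_lt (n : ℕ) :
    |n ! / Real.exp 1 - numDerangements n| < 1 / (n + 1) := by
  rw [numDerangements_eq_factorial_mul_sum, div_eq_mul_inv, ← Real.exp_neg, ← mul_sub, abs_mul,
    abs_of_pos (by positivity)]
  calc (n ! : ℝ) * |Real.exp (-1) - ∑ k ∈ range (n + 1), (-1 : ℝ) ^ k / k !|
      < n ! * (1 / (n + 1) !) := by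
        gcongr
        exact abs_exp_neg_one_sub_sum_range_lt (n + 1)
    _ = 1 / (n + 1) := by
        rw [factorial_succ]
        push_cast
        field_simp

theorem floor_factorial_add_one_div_exp {n : ℕ} (hn : n ≠ 0) :
    ⌊((n ! : ℝ) + 1) / Real.exp 1⌋ = numDerangements n := by
  have he₂ : 1 / Real.exp 1 < 1 / 2 := by gcongr; exact Real.exp_one_gt_two
  have he₃ : 1 / 3 < 1 / Real.exp 1 := by gcongr; exact Real.exp_one_lt_three
  rw [Int.floor_eq_iff, add_div]
  -- for `n = 1` the error bound `1 / (n + 1)` exceeds `1 / e`, but then `D 1 = 0` directly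
  obtain rfl | hn₂ : n = 1 ∨ 2 ≤ n := by omega
  · simp only [factorial_one, cast_one, numDerangements_one, CharP.cast_eq_zero]
    constructor <;> linarith
  · have hr := abs_factorial_div_exp_sub_numDerangements_lt n
    have hn₃ : (1 : ℝ) / (n + 1) ≤ 1 / 3 := by
      gcongr
      exact_mod_cast (by omega : 3 ≤ n + 1)
    rw [abs_lt] at hr
    push_cast
    constructor <;> linarith

theorem floor_factorial_identity (p : ℕ) :
    ⌊((p + 2).factorial : ℝ) / Real.exp 1⌋ =
      ⌊((p + 1).factorial : ℝ) / Real.exp 1⌋ +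
        (p + 1) * ⌊(((p + 1).factorial : ℝ) + 1) / Real.exp 1⌋ := by
  have hfac : ((p + 2)! : ℝ) / Real.exp 1 = ((p + 1 : ℕ) + 1) * ((p + 1)! / Real.exp 1) := by
    rw [factorial_succ (p + 1)]
    push_cast
    ring
  rw [hfac, floor_natCast_add_one_mul_of_abs_sub_lt
    (abs_factorial_div_exp_sub_numDerangements_lt (p + 1)),
    floor_factorial_add_one_div_exp p.succ_ne_zero]
  push_cast
  ring
end

section
/- For every integer n ≥ 0, ∫_{-1}^{0} e^{−t} t^n dt = e · ((1 + (−1)^n)/2 − {n!/e}), where {x} denotes the fractional part of x. -/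
/-!
Substituting `t = -s` turns the integral into `(-1)^n J n` with `J n = ∫₀¹ sⁿ eˢ ds`.
Integration by parts gives `J (n+1) = e - (n+1) J n`, which is the derangement recurrence in
disguise: `J n = (-1)^n (e D n - n!)`, `D n` the number of derangements of `n` points. Hence
`n!/e = D n - (-1)^n J n / e`, and since `0 < J n < e` the fractional part of `n!/e` is
`J n / e` for odd `n` and `1 - J n / e` for even `n`.
-/

open Real intervalIntegral

section FractPart

variable {R : Type*} [Field R] [LinearOrder R] [IsStrictOrderedRing R] [FloorRing R]

theorem Int.fract_intCast_sub_neg_one_pow_mul (d : ℤ) (n : ℕ) {y : R} (hy₀ : 0 < y)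
    (hy₁ : y < 1) :
    Int.fract ((d : R) - (-1) ^ n * y) = (1 + (-1) ^ n) / 2 - (-1) ^ n * y := by
  rcases n.even_or_odd with hn | hn
  · have hsplit : (d : R) - y = ((d - 1 : ℤ) : R) + (1 - y) := by push_cast; ring
    rw [hn.neg_one_pow, one_mul, hsplit, Int.fract_intCast_add,
      Int.fract_eq_self.2 ⟨by linarith, by linarith⟩]
    ring
  · rw [hn.neg_one_pow, neg_one_mul, sub_neg_eq_add, Int.fract_intCast_add,
      Int.fract_eq_self.2 ⟨hy₀.le, hy₁⟩]
    ring

end FractPart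

theorem intervalIntegrable_pow_mul_exp (n : ℕ) (a b : ℝ) :
    IntervalIntegrable (fun s : ℝ => s ^ n * exp s) MeasureTheory.volume a b :=
  (by fun_prop : Continuous fun s : ℝ => s ^ n * exp s).intervalIntegrable a b

theorem integral_pow_succ_mul_exp_zero_one (n : ℕ) :
    ∫ s in (0 : ℝ)..1, s ^ (n + 1) * exp s =
      exp 1 - (n + 1) * ∫ s in (0 : ℝ)..1, s ^ n * exp s := by
  have hparts := integral_mul_deriv_eq_deriv_mul (a := 0) (b := 1)
    (u := fun s : ℝ => s ^ (n + 1)) (u' := fun s => (n + 1 : ℝ) * s ^ n) (v := exp) (v' := exp)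
    (fun s _ => by simpa using hasDerivAt_pow (n + 1) s) (fun s _ => hasDerivAt_exp s)
    ((by fun_prop : Continuous fun s : ℝ => (n + 1 : ℝ) * s ^ n).intervalIntegrable 0 1)
    (continuous_exp.intervalIntegrable 0 1)
  simp_rw [mul_assoc, integral_const_mul] at hparts
  simpa using hparts

theorem integral_pow_mul_exp_eq_numDerangements (n : ℕ) :
    ∫ s in (0 : ℝ)..1, s ^ n * exp s = (-1) ^ n * (exp 1 * numDerangements n - n.factorial) := by
  induction n with
  | zero => simp [integral_exp]
  | succ n ih =>
    have hD : (numDerangements (n + 1) : ℝ) = (n + 1) * numDerangements n - (-1) ^ n := by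
      exact_mod_cast numDerangements_succ n
    have hsq : ((-1 : ℝ) ^ n) * (-1) ^ n = 1 := by rw [← mul_pow]; norm_num
    rw [integral_pow_succ_mul_exp_zero_one, ih, hD, Nat.factorial_succ, pow_succ]
    push_cast
    linear_combination (-exp 1) * hsq

theorem integral_pow_mul_exp_zero_one_pos (n : ℕ) : 0 < ∫ s in (0 : ℝ)..1, s ^ n * exp s :=
  intervalIntegral_pos_of_pos_on (intervalIntegrable_pow_mul_exp n 0 1)
    (fun s hs => by have := hs.1; positivity) zero_lt_one

theorem integral_pow_mul_exp_zero_one_lt (n : ℕ) : ∫ s in (0 : ℝ)..1, s ^ n * exp s < exp 1 := by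
  have hmono : ∫ s in (0 : ℝ)..1, s ^ n * exp s ≤ ∫ s in (0 : ℝ)..1, exp s :=
    integral_mono_on zero_le_one (intervalIntegrable_pow_mul_exp n 0 1)
      (continuous_exp.intervalIntegrable 0 1) fun s hs =>
        mul_le_of_le_one_left (exp_pos s).le (pow_le_one₀ hs.1 hs.2)
  rw [integral_exp, exp_zero] at hmono
  linarith

theorem factorial_div_exp_eq_numDerangements_sub (n : ℕ) :
    (n.factorial : ℝ) / exp 1 =
      (numDerangements n : ℤ) - (-1) ^ n * ((∫ s in (0 : ℝ)..1, s ^ n * exp s) / exp 1) := by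
  have hsq : ((-1 : ℝ) ^ n) * (-1) ^ n = 1 := by rw [← mul_pow]; norm_num
  rw [integral_pow_mul_exp_eq_numDerangements]
  field_simp
  push_cast
  linear_combination (exp 1 * numDerangements n - n.factorial) * hsq

theorem integral_exp_neg_mul_pow_neg_one_zero (n : ℕ) :
    ∫ t in (-1 : ℝ)..0, exp (-t) * t ^ n = (-1) ^ n * ∫ s in (0 : ℝ)..1, s ^ n * exp s := by
  rw [← integral_const_mul]
  have hcomp := integral_comp_neg (a := (-1 : ℝ)) (b := 0)
    (fun s => (-1) ^ n * (s ^ n * exp s))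
  simp only [neg_zero, neg_neg] at hcomp
  rw [← hcomp]
  refine integral_congr fun t _ => ?_
  simp only [← mul_assoc, ← mul_pow, neg_one_mul, neg_neg]
  ring

theorem integral_neg_one_zero (n : ℕ) :
    ∫ t in (-1 : ℝ)..0, Real.exp (-t) * t ^ n =
      Real.exp 1 * ((1 + (-1 : ℝ) ^ n) / 2 - Int.fract ((n.factorial : ℝ) / Real.exp 1)) := by
  set J := ∫ s in (0 : ℝ)..1, s ^ n * exp s
  have hJe : J / exp 1 < 1 := (div_lt_one (exp_pos 1)).2 (integral_pow_mul_exp_zero_one_lt n)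
  rw [factorial_div_exp_eq_numDerangements_sub, Int.fract_intCast_sub_neg_one_pow_mul _ _
    (div_pos (integral_pow_mul_exp_zero_one_pos n) (exp_pos 1)) hJe,
    integral_exp_neg_mul_pow_neg_one_zero]
  field_simp
  ring
end

section
/- For every integer p ≥ 0, −1/(p+2) < (p+1)!/e − ⌊((p+1)! + 1)/e⌋ < 1/(p+2). -/
open Finset

noncomputable def Sexp (n : ℕ) : ℝ := ∑ i ∈ Finset.range (n + 1), (-1 : ℝ) ^ i / i.factorial

noncomputable def sTail (n : ℕ) : ℝ :=
  (-1 : ℝ) ^ (n + 1) * ((n.factorial : ℝ) * (Real.exp (-1) - Sexp n))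

def Aint : ℕ → ℤ
  | 0 => 1
  | n + 1 => (n + 1) * Aint n + (-1) ^ (n + 1)

lemma neg_one_sq' (k : ℕ) : ((-1 : ℝ) ^ k) * ((-1 : ℝ) ^ k) = 1 := by
  rw [← pow_add]
  exact Even.neg_one_pow ⟨k, by ring⟩

lemma Aint_eq (n : ℕ) : (Aint n : ℝ) = (n.factorial : ℝ) * Sexp n := by
  induction n with
  | zero => simp [Aint, Sexp]
  | succ n ih =>
    have hfac : ((n+1).factorial : ℝ) = ((n : ℝ) + 1) * n.factorial := by
      push_cast [Nat.factorial_succ]; ring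
    have hfpos : (0:ℝ) < (n.factorial : ℝ) := by positivity
    have hS : Sexp (n+1) = Sexp n + (-1 : ℝ)^(n+1) / ((n+1).factorial : ℝ) := by
      simp [Sexp, Finset.sum_range_succ]
    rw [hS, show Aint (n+1) = (n+1) * Aint n + (-1)^(n+1) from rfl]
    push_cast [ih, hfac]
    field_simp

lemma exp_eq (n : ℕ) :
    (n.factorial : ℝ) * Real.exp (-1) = (Aint n : ℝ) + (-1 : ℝ) ^ (n+1) * sTail n := by
  rw [Aint_eq, sTail, ← mul_assoc, neg_one_sq', one_mul]
  ring

lemma sTail_rec (n : ℕ) : sTail (n+1) = 1 - ((n:ℝ) + 1) * sTail n := by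
  unfold sTail
  have hS : Sexp (n+1) = Sexp n + (-1 : ℝ)^(n+1) / ((n+1).factorial : ℝ) := by
    simp [Sexp, Finset.sum_range_succ]
  have hfac : ((n+1).factorial : ℝ) = ((n : ℝ) + 1) * n.factorial := by
    push_cast [Nat.factorial_succ]; ring
  have hfpos : (0:ℝ) < ((n+1).factorial : ℝ) := by positivity
  have hp1 : ((-1:ℝ))^(n+1+1) = -((-1:ℝ))^(n+1) := by rw [pow_succ]; ring
  have h2 := neg_one_sq' (n+1)
  rw [hS, hp1, hfac]
  rw [hfac] at hfpos
  field_simp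
  nlinarith [h2]

lemma sTail_weak (m : ℕ) : |sTail m| ≤ ((m:ℝ) + 2) / (((m:ℝ) + 1) * ((m:ℝ) + 1)) := by
  have hb := Real.exp_bound (x := -1) (by norm_num) (n := m + 1) (Nat.succ_pos m)
  have hsum : ∑ i ∈ Finset.range (m+1), (-1:ℝ)^i / i.factorial = Sexp m := rfl
  rw [hsum] at hb
  have hb' : |Real.exp (-1) - Sexp m| ≤ ((m:ℝ) + 1 + 1) / (((m+1).factorial : ℝ) * ((m:ℝ)+1)) := by
    simpa [abs_neg, Nat.succ_eq_add_one] using hb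
  have habs : |sTail m| = (m.factorial : ℝ) * |Real.exp (-1) - Sexp m| := by
    unfold sTail
    rw [abs_mul, abs_mul, abs_pow, abs_neg, abs_one, one_pow, one_mul, Nat.abs_cast]
  rw [habs]
  have hfac : ((m+1).factorial : ℝ) = ((m : ℝ) + 1) * m.factorial := by
    push_cast [Nat.factorial_succ]; ring
  have hfpos : (0:ℝ) < (m.factorial : ℝ) := by positivity
  calc (m.factorial : ℝ) * |Real.exp (-1) - Sexp m|
      ≤ (m.factorial : ℝ) * (((m:ℝ) + 1 + 1) / (((m+1).factorial : ℝ) * ((m:ℝ)+1))) :=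
        mul_le_mul_of_nonneg_left hb' (le_of_lt hfpos)
    _ = ((m:ℝ) + 2) / (((m:ℝ) + 1) * ((m:ℝ) + 1)) := by
        rw [hfac]; field_simp; ring

lemma sTail_lt_one (m : ℕ) (hm : 2 ≤ m) : sTail m < 1 := by
  have h := sTail_weak m
  have hm' : (2:ℝ) ≤ (m:ℝ) := by exact_mod_cast hm
  have : ((m:ℝ) + 2) / (((m:ℝ) + 1) * ((m:ℝ) + 1)) < 1 := by
    rw [div_lt_one (by nlinarith)]; nlinarith
  calc sTail m ≤ |sTail m| := le_abs_self _
    _ ≤ _ := h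
    _ < 1 := this

lemma sTail_bounds (n : ℕ) : 1 / ((n:ℝ) + 2) < sTail n ∧ sTail n < 1 / ((n:ℝ) + 1) := by
  have h3 : sTail (n+3) < 1 := sTail_lt_one _ (by omega)
  have h2 : sTail (n+2) < 1 := sTail_lt_one _ (by omega)
  have r3 : sTail (n+3) = 1 - ((n:ℝ) + 3) * sTail (n+2) := by
    have := sTail_rec (n+2); push_cast at this ⊢; linarith
  have r2 : sTail (n+2) = 1 - ((n:ℝ) + 2) * sTail (n+1) := by
    have := sTail_rec (n+1); push_cast at this ⊢; linarith
  have r1 : sTail (n+1) = 1 - ((n:ℝ) + 1) * sTail n := sTail_rec n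
  have hn : (0:ℝ) ≤ (n:ℝ) := Nat.cast_nonneg n
  have h2pos : 0 < sTail (n+2) := by nlinarith
  have h1pos : 0 < sTail (n+1) := by nlinarith
  have h1lt : sTail (n+1) < 1 / ((n:ℝ) + 2) := by
    rw [lt_div_iff₀ (by linarith)]; nlinarith
  constructor
  · rw [div_lt_iff₀ (by linarith)]; nlinarith
  · rw [lt_div_iff₀ (by linarith)]; nlinarith

lemma floor_eq (n : ℕ) (hn : 1 ≤ n) :
    ⌊((n.factorial : ℝ) + 1) * Real.exp (-1)⌋ = Aint n := by
  obtain ⟨hb1, hb2⟩ := sTail_bounds n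
  have hn' : (1:ℝ) ≤ (n:ℝ) := by exact_mod_cast hn
  have hepos : (0:ℝ) < Real.exp 1 := Real.exp_pos 1
  have he1 : (2:ℝ) < Real.exp 1 := by have := Real.exp_one_gt_d9; linarith
  have he2 : Real.exp 1 < (3:ℝ) := by have := Real.exp_one_lt_d9; linarith
  have einv : Real.exp (-1) = (Real.exp 1)⁻¹ := Real.exp_neg 1
  have hinv : Real.exp (-1) * Real.exp 1 = 1 := by rw [einv]; field_simp
  have heinv1 : Real.exp (-1) < 1/2 := by nlinarith [Real.exp_pos (-1)]
  have heinv2 : (1:ℝ)/3 < Real.exp (-1) := by nlinarith [Real.exp_pos (-1)]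
  have hexp : ((n.factorial:ℝ)+1) * Real.exp (-1)
      = (Aint n : ℝ) + (-1:ℝ)^(n+1) * sTail n + Real.exp (-1) := by
    rw [add_mul, exp_eq, one_mul]
  rw [Int.floor_eq_iff, hexp]
  have hub : sTail n < 1 / 2 := by
    have : 1 / ((n:ℝ) + 1) ≤ 1/2 := by
      rw [div_le_div_iff₀ (by linarith) (by norm_num)]; linarith
    linarith
  have hlb : 0 < sTail n := by
    have : 0 < 1 / ((n:ℝ) + 2) := by positivity
    linarith
  rcases Nat.even_or_odd n with he | ho
  · have hp : (-1:ℝ)^(n+1) = -1 := Odd.neg_one_pow (Even.add_one he)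
    have hn2 : 2 ≤ n := by
      rcases he with ⟨k, hk⟩; omega
    have hn2' : (2:ℝ) ≤ (n:ℝ) := by exact_mod_cast hn2
    have h13 : sTail n < 1/3 := by
      have : 1 / ((n:ℝ) + 1) ≤ 1/3 := by
        rw [div_le_div_iff₀ (by linarith) (by norm_num)]; linarith
      linarith
    rw [hp]
    constructor
    · push_cast; nlinarith
    · push_cast; nlinarith
  · have hp : (-1:ℝ)^(n+1) = 1 := Even.neg_one_pow (Odd.add_one ho)
    rw [hp]
    constructor
    · push_cast; nlinarith [Real.exp_pos (-1)]
    · push_cast; nlinarith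

theorem factorial_floor_bounds (p : ℕ) :
    -1 / ((p : ℝ) + 2) < ((p + 1).factorial : ℝ) / Real.exp 1 - ⌊(((p + 1).factorial : ℝ) + 1) / Real.exp 1⌋ ∧
    ((p + 1).factorial : ℝ) / Real.exp 1 - ⌊(((p + 1).factorial : ℝ) + 1) / Real.exp 1⌋ < 1 / ((p : ℝ) + 2) := by
  have hdiv : ∀ x : ℝ, x / Real.exp 1 = x * Real.exp (-1) := by
    intro x; rw [Real.exp_neg, div_eq_mul_inv]
  obtain ⟨hb1, hb2⟩ := sTail_bounds (p+1)
  push_cast at hb1 hb2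
  have hfl : ⌊(((p + 1).factorial : ℝ) + 1) / Real.exp 1⌋ = Aint (p+1) := by
    rw [hdiv]; exact floor_eq (p+1) (by omega)
  have hkey := exp_eq (p+1)
  rw [hfl, hdiv]
  have e2 : 1/((p:ℝ)+1+1) = 1/((p:ℝ)+2) := by ring_nf
  have e3 : (-1:ℝ)/((p:ℝ)+2) = -(1/((p:ℝ)+2)) := by ring
  have hb0 : 0 < sTail (p+1) := lt_trans (by positivity) hb1
  rw [e2] at hb2
  rcases neg_one_pow_eq_or ℝ (p+1+1) with hp | hp <;>
    rw [hp] at hkey <;>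
    exact ⟨by rw [e3]; linarith, by linarith⟩
end

section
/- For every integer p ≥ 0, Σ_{n=0}^{p} n · D(n) = D(p+1) − (1 − (−1)^p)/2; that is, the sum equals D(p+1) if p is even and D(p+1) − 1 if p is odd. -/
theorem sum_n_derangements_eq (p : ℕ) :
    (∑ n ∈ Finset.range (p + 1), n * numDerangements n : ℤ) =
      (numDerangements (p + 1) : ℤ) - (1 - (-1) ^ p) / 2 := by
  induction p with
  | zero => simp [numDerangements]
  | succ p ih =>
    rw [Finset.sum_range_succ, ih, numDerangements_succ (p + 1)]
    rcases Nat.even_or_odd p with h | h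
    · rw [h.neg_one_pow, (Odd.neg_one_pow (Even.add_one h))]
      push_cast
      ring
    · rw [h.neg_one_pow, (Even.neg_one_pow (Odd.add_one h))]
      push_cast
      ring
end

section
/- With A_N defined by A_1 = 0 and A_N = N·A_{N−1} + (N−1 if N odd, else 0) for N > 1, one has Σ_{n=0}^{p} n·D(n) = A_{p+1} for every integer p ≥ 0. -/
lemma sum_n_der (n : ℕ) :
    (∑ k ∈ Finset.range (n + 1), k * numDerangements k : ℤ) =
      numDerangements (n + 1) - if Even (n + 1) then 1 else 0 := by
  induction n with
  | zero => simp
  | succ n ih =>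
      rw [Finset.sum_range_succ, ih, numDerangements_succ (n + 1), numDerangements_succ n]
      rcases Nat.even_or_odd n with h | h
      · have h1 : ¬ Even (n + 1) := by simp [Nat.even_add_one, h]
        have h2 : Even (n + 2) := by simpa [Nat.even_add_one, h1]
        rw [h.neg_one_pow, (Nat.not_even_iff_odd.mp h1).neg_one_pow]
        simp only [h1, h2, if_true, if_false]
        push_cast
        ring
      · have h1 : Even (n + 1) := by simpa [Nat.even_add_one]
        have h2 : ¬ Even (n + 2) := by simp [Nat.even_add_one, h1]
        rw [h.neg_one_pow, h1.neg_one_pow]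
        simp only [h1, h2, if_true, if_false]
        push_cast
        ring

theorem sum_n_derangements_eq_A (A : ℕ → ℤ) (h1 : A 1 = 0)
    (hrec : ∀ N, 1 < N → A N = N * A (N - 1) + if Odd N then (N : ℤ) - 1 else 0)
    (p : ℕ) :
    (∑ n ∈ Finset.range (p + 1), n * numDerangements n : ℤ) = A (p + 1) := by
  have key : ∀ n : ℕ, A (n + 1) = numDerangements (n + 1) - if Even (n + 1) then 1 else 0 := by
    intro n
    induction n with
    | zero => simp [h1, numDerangements_one, Nat.even_add_one]
    | succ n ih =>
        have := hrec (n + 2) (by omega)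
        rw [show n + 2 - 1 = n + 1 from rfl] at this
        rw [this, ih, numDerangements_succ (n + 1)]
        rcases Nat.even_or_odd n with h | h
        · have h1' : ¬ Even (n + 1) := by simp [Nat.even_add_one, h]
          have h2 : Even (n + 2) := by simpa [Nat.even_add_one] using h1'
          have h3 : ¬ Odd (n + 2) := Nat.not_odd_iff_even.mpr h2
          rw [(Nat.not_even_iff_odd.mp h1').neg_one_pow]
          simp only [h1', h2, h3, if_true, if_false]
          push_cast
          ring
        · have h1' : Even (n + 1) := by simpa [Nat.even_add_one]
          have h2 : ¬ Even (n + 2) := by simp [Nat.even_add_one, h1']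
          have h3 : Odd (n + 2) := Nat.not_even_iff_odd.mp h2
          rw [h1'.neg_one_pow]
          simp only [h1', h2, h3, if_true, if_false]
          push_cast
          ring
  rw [sum_n_der, key]
end
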